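/- For α ∈ ℂ let 𝒵₀₂^α be ℂ⁵ with basis e₁,…,e₅ and bilinear multiplication given by e₁e₁ = e₂, e₁e₂ = e₅, e₂e₁ = 2e₅, e₃e₄ = e₅, e₄e₃ = α e₅, all other basis products zero. Then for every nonzero α ∈ ℂ, the algebras 𝒵₀₂^α and 𝒵₀₂^{α⁻¹} are isomorphic: there exists a linear bijection φ : ℂ⁵ → ℂ⁵ such that φ(x·_α y) = φ(x)·_{α⁻¹}φ(y) for all x,y ∈ ℂ⁵, where ·_α and ·_{α⁻¹} denote the two multiplications. -/
import Mathlib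


/-- The standard basis of `ℂ⁵`. -/
def ee (i : Fin 5) : Fin 5 → ℂ := Pi.single i 1

/-- Structure constants (0-indexed) of the algebra `𝒵₀₂^α`:
`e₁e₁ = e₂`, `e₁e₂ = e₅`, `e₂e₁ = 2e₅`, `e₃e₄ = e₅`, `e₄e₃ = α e₅`. -/
def cZ02 (α : ℂ) (i j : Fin 5) : Fin 5 → ℂ :=
  if i = 0 ∧ j = 0 then ee 1
  else if i = 0 ∧ j = 1 then ee 4
  else if i = 1 ∧ j = 0 then (2 : ℂ) • ee 4
  else if i = 2 ∧ j = 3 then ee 4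
  else if i = 3 ∧ j = 2 then α • ee 4
  else 0

lemma basis_expand (x : Fin 5 → ℂ) : x = ∑ i, x i • ee i := by
  funext k
  simp [ee, Finset.sum_apply, Pi.single_apply]

/-- The isomorphism: `e₁ ↦ e₁`, `e₂ ↦ e₂`, `e₃ ↦ α e₄`, `e₄ ↦ e₃`, `e₅ ↦ e₅`. -/
noncomputable def myφ (α : ℂ) (hα : α ≠ 0) : (Fin 5 → ℂ) ≃ₗ[ℂ] (Fin 5 → ℂ) where
  toFun := fun x => ![x 0, x 1, x 3, α * x 2, x 4]
  invFun := fun y => ![y 0, y 1, α⁻¹ * y 3, y 2, y 4]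
  map_add' := by intro x y; funext k; fin_cases k <;> simp <;> ring
  map_smul' := by intro c x; funext k; fin_cases k <;> simp <;> ring
  left_inv := by
    intro x; funext k; fin_cases k <;> simp <;> field_simp
  right_inv := by
    intro y; funext k; fin_cases k <;> simp <;> field_simp

lemma myφ_ee0 (α : ℂ) (hα : α ≠ 0) : myφ α hα (ee 0) = ee 0 := by
  funext k; fin_cases k <;> simp [myφ, ee, Pi.single_apply]
lemma myφ_ee1 (α : ℂ) (hα : α ≠ 0) : myφ α hα (ee 1) = ee 1 := by
  funext k; fin_cases k <;> simp [myφ, ee, Pi.single_apply]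
lemma myφ_ee2 (α : ℂ) (hα : α ≠ 0) : myφ α hα (ee 2) = α • ee 3 := by
  funext k; fin_cases k <;> simp [myφ, ee, Pi.single_apply]
lemma myφ_ee3 (α : ℂ) (hα : α ≠ 0) : myφ α hα (ee 3) = ee 2 := by
  funext k; fin_cases k <;> simp [myφ, ee, Pi.single_apply]
lemma myφ_ee4 (α : ℂ) (hα : α ≠ 0) : myφ α hα (ee 4) = ee 4 := by
  funext k; fin_cases k <;> simp [myφ, ee, Pi.single_apply]

/-- for every nonzero `α`, the algebras `𝒵₀₂^α` and `𝒵₀₂^{α⁻¹}`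
are isomorphic. -/
theorem Z02_isomorphic_inv (α : ℂ) (hα : α ≠ 0)
    (μα μβ : (Fin 5 → ℂ) →ₗ[ℂ] (Fin 5 → ℂ) →ₗ[ℂ] (Fin 5 → ℂ))
    (hμα : ∀ i j, μα (ee i) (ee j) = cZ02 α i j)
    (hμβ : ∀ i j, μβ (ee i) (ee j) = cZ02 α⁻¹ i j) :
    ∃ φ : (Fin 5 → ℂ) ≃ₗ[ℂ] (Fin 5 → ℂ),
      ∀ x y : Fin 5 → ℂ, φ (μα x y) = μβ (φ x) (φ y) := by
  refine ⟨myφ α hα, ?_⟩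
  have key : ∀ i j : Fin 5, myφ α hα (cZ02 α i j) = μβ (myφ α hα (ee i)) (myφ α hα (ee j)) := by
    intro i j
    fin_cases i <;> fin_cases j <;>
      simp [cZ02, myφ_ee0, myφ_ee1, myφ_ee2, myφ_ee3, myφ_ee4, hμβ, map_smul,
        smul_smul, mul_inv_cancel₀ hα, inv_mul_cancel₀ hα]
  intro x y
  rw [basis_expand x, basis_expand y]
  simp only [map_sum, map_smul, LinearMap.sum_apply, LinearMap.smul_apply, hμα, key]
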